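/- arXiv:0902.4373 — 2 statements merged into one kernel-verified Lean document; each statement's English description precedes it below -/
import Mathlib

section
/- Let f ∈ L²(0,1), g = Proj_K(f) its projection onto the cone K of nondecreasing functions, z ∈ K, and ψ ∈ C¹(ℝ) convex. If (f-g)ψ'(z-g) ∈ L¹(0,1), then ∫₀¹ (f(w) - g(w)) ψ'(z(w) - g(w)) dw ≤ 0. -/
/-! The variational inequality `∫ ξ (z' - g) ≤ 0` for all `z' ∈ K`, with `ξ = f - g`, is tested
against `z' = g + t Φ(z - g)`. If `Φ` is monotone and `L`-Lipschitz and `t L ≤ 1`, then `z'` is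
again nondecreasing, because `z' = z - k(z - g)` with `k = id - tΦ` monotone; this gives
`∫ ξ Φ(z - g) ≤ 0`. The continuous monotone `Φ = ψ'` is reached by two dominated-convergence
steps: truncating its values to `[-n, n]` (dominated by the integrable `|ξ Φ(z - g)|`), and
replacing a bounded `Φ` by its Steklov averages, which are monotone and Lipschitz. -/

open MeasureTheory Set Filter

noncomputable section

/-- Lebesgue measure restricted to the interval (0,1). -/
def μ01 : MeasureTheory.Measure ℝ := MeasureTheory.volume.restrict (Set.Ioo 0 1)

/-- The convex cone `K` of (essentially) nondecreasing functions in L²(0,1). -/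
def coneK : Set (ℝ → ℝ) := {g | MonotoneOn g (Set.Ioo 0 1) ∧ MeasureTheory.MemLp g 2 μ01}

/-- `g` is the L²(0,1)-orthogonal projection of `f` onto the cone `K`,
characterized by the variational inequality `⟨f - g, z - g⟩ ≤ 0` for all `z ∈ K`. -/
def IsProjK (f g : ℝ → ℝ) : Prop :=
  g ∈ coneK ∧ ∀ z ∈ coneK, (∫ w in Set.Ioo (0:ℝ) 1, (f w - g w) * (z w - g w)) ≤ 0

/-- The convex envelope of `F` on `[0,1]`: the supremum of affine functions below `F` there. -/
def convEnv (F : ℝ → ℝ) (w : ℝ) : ℝ :=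
  sSup {y | ∃ a b : ℝ, y = a + b * w ∧ ∀ v ∈ Set.Icc (0:ℝ) 1, a + b * v ≤ F v}

/-- The open set `Ω_g ⊆ (0,1)` of points near which `g` is essentially constant. -/
def locConstSet (g : ℝ → ℝ) : Set ℝ :=
  {w | w ∈ Set.Ioo (0:ℝ) 1 ∧ ∃ a b c : ℝ, a < w ∧ w < b ∧
    ∀ᵐ x ∂μ01, x ∈ Set.Ioo a b → g x = c}

/-- The closed subspace `H_g` of L²(0,1) functions essentially constant on each
open interval contained in `Ω_g`. -/
def Hspace (g : ℝ → ℝ) : Set (ℝ → ℝ) :=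
  {u | MeasureTheory.MemLp u 2 μ01 ∧ ∀ a b : ℝ, Set.Ioo a b ⊆ locConstSet g →
    ∃ c : ℝ, ∀ᵐ x ∂μ01, x ∈ Set.Ioo a b → u x = c}

/-- `ξ` belongs to the subdifferential `∂I_K(g)` of the indicator function of `K` at `g ∈ K`. -/
def subdiffIK (g ξ : ℝ → ℝ) : Prop :=
  g ∈ coneK ∧ ∀ z ∈ coneK, (∫ w in Set.Ioo (0:ℝ) 1, ξ w * (z w - g w)) ≤ 0

open NNReal Topology

instance isFiniteMeasure_μ01 : IsFiniteMeasure μ01 := by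
  rw [μ01]
  infer_instance

lemma MonotoneOn.add_comp_sub {α : Type*} [Preorder α] {s : Set α} {g z : α → ℝ} {h : ℝ → ℝ}
    (hg : MonotoneOn g s) (hz : MonotoneOn z s) (hh : Monotone h)
    (hh' : Monotone fun x => x - h x) :
    MonotoneOn (fun w => g w + h (z w - g w)) s := by
  intro a ha b hb hab
  have h1 : h (z a - g a) ≤ h (z b - g a) := hh (by linarith [hz ha hb hab])
  have h2 : (z b - g b) - h (z b - g b) ≤ (z b - g a) - h (z b - g a) :=
    hh' (by linarith [hg ha hb hab])
  simp only
  linarith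

lemma LipschitzWith.monotone_sub_mul {Φ : ℝ → ℝ} {L : ℝ≥0} (hΦ : LipschitzWith L Φ) {t : ℝ}
    (ht : 0 ≤ t) (htL : t * L ≤ 1) : Monotone fun s => s - t * Φ s := by
  intro a b hab
  have hdist : Φ b - Φ a ≤ L * (b - a) := by
    have := hΦ.dist_le_mul b a
    rw [Real.dist_eq, Real.dist_eq, abs_of_nonneg (sub_nonneg.2 hab)] at this
    exact (le_abs_self _).trans this
  have : t * (Φ b - Φ a) ≤ b - a := by
    nlinarith [mul_le_mul_of_nonneg_left hdist ht]
  simp only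
  linarith

lemma LipschitzWith.memLp_comp {α : Type*} [MeasurableSpace α] {μ : Measure α} [IsFiniteMeasure μ]
    {p : ENNReal} {Φ : ℝ → ℝ} {L : ℝ≥0} (hΦ : LipschitzWith L Φ) {u : α → ℝ} (hu : MemLp u p μ) :
    MemLp (fun w => Φ (u w)) p μ := by
  have hΦ₀ : LipschitzWith L fun s => Φ s - Φ 0 := by
    simpa using hΦ.sub (LipschitzWith.const (Φ 0))
  convert (hΦ₀.comp_memLp (sub_self _) hu).add (memLp_const (Φ 0)) using 1
  ext w
  simp

lemma subdiffIK.integral_mul_comp_nonpos_of_lipschitzWith {g ξ z Φ : ℝ → ℝ} {L : ℝ≥0}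
    (hξ : subdiffIK g ξ) (hz : z ∈ coneK) (hΦ : Monotone Φ) (hL : LipschitzWith L Φ) :
    ∫ w, ξ w * Φ (z w - g w) ∂μ01 ≤ 0 := by
  set t : ℝ := ((L : ℝ) + 1)⁻¹
  have ht : 0 < t := by positivity
  have htL : t * L ≤ 1 := by
    rw [inv_mul_le_iff₀ (by positivity)]
    linarith
  have hmem : (fun w => g w + t * Φ (z w - g w)) ∈ coneK :=
    ⟨hξ.1.1.add_comp_sub hz.1 (fun a b hab => mul_le_mul_of_nonneg_left (hΦ hab) ht.le)
      (hL.monotone_sub_mul ht.le htL),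
     hξ.1.2.add ((hL.memLp_comp (hz.2.sub hξ.1.2)).const_mul t)⟩
  have hVI := hξ.2 _ hmem
  simp only [add_sub_cancel_left, mul_left_comm _ t, integral_const_mul] at hVI
  exact nonpos_of_mul_nonpos_right hVI ht

def steklov (Φ : ℝ → ℝ) (ε t : ℝ) : ℝ := ε⁻¹ * ∫ s in t..t + ε, Φ s

lemma Monotone.steklov {Φ : ℝ → ℝ} (hΦ : Monotone Φ) {ε : ℝ} (hε : 0 ≤ ε) :
    Monotone (steklov Φ ε) := by
  intro a b hab
  have hshift : ∀ t, ∫ s in t..t + ε, Φ s = ∫ s in 0..ε, Φ (s + t) := fun t => by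
    rw [intervalIntegral.integral_comp_add_right, zero_add, add_comm]
  simp only [_root_.steklov, hshift]
  gcongr
  exact intervalIntegral.integral_mono_on hε (hΦ.comp (monotone_id.add_const a)).intervalIntegrable
    (hΦ.comp (monotone_id.add_const b)).intervalIntegrable fun s _ => hΦ (by linarith)

lemma abs_steklov_le {Φ : ℝ → ℝ} {C ε : ℝ} (hC : ∀ s, |Φ s| ≤ C) (hε : 0 < ε) (t : ℝ) :
    |steklov Φ ε t| ≤ C := by
  have h := intervalIntegral.norm_integral_le_of_norm_le_const (a := t) (b := t + ε) (f := Φ)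
    fun s _ => (Real.norm_eq_abs _).trans_le (hC s)
  rw [add_sub_cancel_left, abs_of_pos hε, Real.norm_eq_abs] at h
  rw [steklov, abs_mul, abs_inv, abs_of_pos hε, inv_mul_le_iff₀ hε]
  linarith

lemma lipschitzWith_steklov {Φ : ℝ → ℝ} (hΦ : LocallyIntegrable Φ) {C ε : ℝ} (hC : ∀ s, |Φ s| ≤ C)
    (hε : 0 < ε) : LipschitzWith (2 * C / ε).toNNReal (steklov Φ ε) := by
  refine LipschitzWith.of_dist_le_mul fun a b => ?_
  have hint : ∀ x y, IntervalIntegrable Φ volume x y := fun _ _ =>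
    (hΦ.integrableOn_isCompact isCompact_uIcc).intervalIntegrable
  have hbound : ∀ x y, |∫ s in x..y, Φ s| ≤ C * |y - x| := fun x y =>
    intervalIntegral.norm_integral_le_of_norm_le_const fun s _ =>
      (Real.norm_eq_abs _).trans_le (hC s)
  have hdiff : steklov Φ ε a - steklov Φ ε b
      = ε⁻¹ * ((∫ s in a..b, Φ s) - ∫ s in a + ε..b + ε, Φ s) := by
    rw [steklov, steklov, ← mul_sub,
      intervalIntegral.integral_interval_sub_interval_comm (hint _ _) (hint _ _) (hint _ _)]
  have h1 := hbound a b
  have h2 := hbound (a + ε) (b + ε)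
  rw [add_sub_add_right_eq_sub] at h2
  rw [Real.dist_eq, Real.dist_eq, hdiff, abs_mul, abs_inv, abs_of_pos hε,
    Real.coe_toNNReal _ (by have := (abs_nonneg _).trans (hC 0); positivity),
    abs_sub_comm a b, div_mul_eq_mul_div, le_div_iff₀ hε, inv_mul_eq_div, div_mul_cancel₀ _ hε.ne']
  linarith [abs_sub ((∫ s in a..b, Φ s)) (∫ s in a + ε..b + ε, Φ s)]

lemma Continuous.tendsto_steklov {Φ : ℝ → ℝ} (hΦ : Continuous Φ) (t : ℝ) :
    Tendsto (fun ε => steklov Φ ε t) (𝓝[>] 0) (𝓝 (Φ t)) := by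
  have hderiv : HasDerivAt (fun u => ∫ s in t..u, Φ s) (Φ t) t :=
    intervalIntegral.integral_hasDerivAt_right (hΦ.intervalIntegrable _ _)
      (hΦ.stronglyMeasurableAtFilter _ _) hΦ.continuousAt
  simpa [steklov] using hderiv.tendsto_slope_zero_right

lemma subdiffIK.integral_mul_comp_nonpos_of_bounded {g ξ z Φ : ℝ → ℝ} {C : ℝ}
    (hξ : subdiffIK g ξ) (hξi : Integrable ξ μ01) (hz : z ∈ coneK) (hΦ : Monotone Φ)
    (hΦc : Continuous Φ) (hC : ∀ s, |Φ s| ≤ C) :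
    ∫ w, ξ w * Φ (z w - g w) ∂μ01 ≤ 0 := by
  set ε : ℕ → ℝ := fun n => 1 / (n + 1)
  have hε : ∀ n, 0 < ε n := fun n => Nat.one_div_pos_of_nat
  have hε_lim : Tendsto ε atTop (𝓝[>] 0) :=
    tendsto_nhdsWithin_iff.2 ⟨tendsto_one_div_add_atTop_nhds_zero_nat, Eventually.of_forall hε⟩
  have hL : ∀ n, LipschitzWith _ (steklov Φ (ε n)) := fun n =>
    lipschitzWith_steklov hΦc.locallyIntegrable hC (hε n)
  have hu : AEStronglyMeasurable (fun w => z w - g w) μ01 := (hz.2.sub hξ.1.2).1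
  have hlim := tendsto_integral_of_dominated_convergence (fun w => |ξ w| * C)
    (F := fun n w => ξ w * steklov Φ (ε n) (z w - g w))
    (fun n => hξi.1.mul ((hL n).continuous.comp_aestronglyMeasurable hu))
    (hξi.abs.mul_const C)
    (fun n => Eventually.of_forall fun w => by
      rw [Real.norm_eq_abs, abs_mul]
      exact mul_le_mul_of_nonneg_left (abs_steklov_le hC (hε n) _) (abs_nonneg _))
    (Eventually.of_forall fun w => ((hΦc.tendsto_steklov _).comp hε_lim).const_mul _)
  exact le_of_tendsto hlim (Eventually.of_forall fun n =>
    hξ.integral_mul_comp_nonpos_of_lipschitzWith hz (hΦ.steklov (hε n).le) (hL n))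

lemma abs_max_neg_min_le {c x : ℝ} (hc : 0 ≤ c) : |max (-c) (min c x)| ≤ min c |x| := by
  rcases le_total 0 x with hx | hx
  · rw [abs_of_nonneg hx, abs_of_nonneg (le_max_of_le_right (le_min hc hx)),
      max_eq_right (by linarith [le_min hc hx])]
  · rw [abs_of_nonpos hx, abs_of_nonpos (max_le (by linarith) (min_le_of_right_le hx)),
      min_eq_right (by linarith)]
    grind

lemma subdiffIK.integral_mul_comp_nonpos {g ξ z Φ : ℝ → ℝ} (hξ : subdiffIK g ξ)
    (hξi : Integrable ξ μ01) (hz : z ∈ coneK) (hΦ : Monotone Φ) (hΦc : Continuous Φ)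
    (hint : Integrable (fun w => ξ w * Φ (z w - g w)) μ01) :
    ∫ w, ξ w * Φ (z w - g w) ∂μ01 ≤ 0 := by
  set Φ' : ℕ → ℝ → ℝ := fun n s => max (-n) (min n (Φ s))
  have hΦ'_abs : ∀ n s, |Φ' n s| ≤ min (n : ℝ) |Φ s| := fun n s => abs_max_neg_min_le n.cast_nonneg
  have hΦ'_cont : ∀ n, Continuous (Φ' n) := fun n => continuous_const.max (continuous_const.min hΦc)
  have hu : AEStronglyMeasurable (fun w => z w - g w) μ01 := (hz.2.sub hξ.1.2).1
  have hlim := tendsto_integral_of_dominated_convergence (fun w => |ξ w * Φ (z w - g w)|)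
    (F := fun n w => ξ w * Φ' n (z w - g w)) (f := fun w => ξ w * Φ (z w - g w))
    (fun n => hξi.1.mul ((hΦ'_cont n).comp_aestronglyMeasurable hu))
    hint.abs
    (fun n => Eventually.of_forall fun w => by
      rw [Real.norm_eq_abs, abs_mul, abs_mul]
      exact mul_le_mul_of_nonneg_left ((hΦ'_abs n _).trans (min_le_right _ _)) (abs_nonneg _))
    (Eventually.of_forall fun w => tendsto_const_nhds.congr' <| by
      filter_upwards [eventually_ge_atTop ⌈|Φ (z w - g w)|⌉₊] with n hn
      have hn : |Φ (z w - g w)| ≤ n := (Nat.le_ceil _).trans (by exact_mod_cast hn)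
      simp only [Φ', min_eq_right (le_of_abs_le hn), max_eq_right (neg_le_of_abs_le hn)])
  exact le_of_tendsto hlim (Eventually.of_forall fun n =>
    hξ.integral_mul_comp_nonpos_of_bounded hξi hz
      (fun a b hab => max_le_max le_rfl (min_le_min le_rfl (hΦ hab))) (hΦ'_cont n)
      (fun s => (hΦ'_abs n s).trans (min_le_left _ _)))

theorem stmt7 (f g z ψ : ℝ → ℝ) (hf : MeasureTheory.MemLp f 2 μ01)
    (hg : IsProjK f g) (hz : z ∈ coneK)
    (hψ : ContDiff ℝ 1 ψ) (hconv : ConvexOn ℝ Set.univ ψ)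
    (hint : MeasureTheory.Integrable (fun w => (f w - g w) * deriv ψ (z w - g w)) μ01) :
    (∫ w in Set.Ioo (0:ℝ) 1, (f w - g w) * deriv ψ (z w - g w)) ≤ 0 := by
  have hψ' : Monotone (deriv ψ) := monotoneOn_univ.1 <|
    hconv.monotoneOn_deriv fun x _ => (hψ.differentiable one_ne_zero).differentiableAt
  exact subdiffIK.integral_mul_comp_nonpos hg ((hf.sub hg.1.2).integrable one_le_two) hz hψ'
    (hψ.continuous_deriv le_rfl) hint
end
end

section
/- Let g ∈ K and ξ ∈ L²(0,1) with primitive Ξ(w) = ∫₀ʷ ξ(s) ds. Then ξ belongs to the subdifferential ∂I_K(g) of the indicator function of K at g if and only if Ξ ≥ 0 on [0,1], Ξ(0) = Ξ(1) = 0, and Ξ vanishes on the complement of the open set Ω_g where g is locally essentially constant. -/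
open MeasureTheory Set Filter

noncomputable section

/-!
Write `Ξ` for the primitive of `ξ` and, for `φ` nondecreasing on `(0, 1)` with values in `[A, B]`,
`σ_φ(t)` for the point where `φ` crosses the level `t`. Fubini over the levels gives the
integration by parts `⟨ξ, φ⟩ = B Ξ(1) - ∫_A^B Ξ(σ_φ(t)) dt`.

If `ξ ∈ ∂I_K(g)`, testing with `g ± 1`, `g + 1_{(w, 1)}` and `g ± (φ - g)`, with `φ` a truncation
of `g`, gives `Ξ(1) = 0`, `Ξ ≥ 0` and `⟨ξ, φ⟩ = 0`. If `g(u) < g(v)`, the crossing points of the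
truncation of `g` at the levels `g(u), g(v)` lie in `[u, v]`, so `Ξ` cannot be positive on a
neighbourhood of a point outside `Ω_g`. Conversely, `Ξ ≥ 0` gives `⟨ξ, z⟩ ≤ 0` for truncations of
every `z ∈ K`, and crossing points of truncations of `g` never lie in `Ω_g`, so `⟨ξ, g⟩ = 0`;
dominated convergence removes the truncations.
-/

open Topology

instance : IsFiniteMeasure μ01 := by
  unfold μ01
  infer_instance

section LayerCake

variable {α : Type*} [MeasurableSpace α] {μ : Measure α} {ξ φ : α → ℝ} {A B : ℝ}

lemma integrable_indicator_lt_prod (hξ : Integrable ξ μ) (hφ : AEStronglyMeasurable φ μ) :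
    Integrable (fun p : α × ℝ => (Iio (φ p.1)).indicator (fun _ => ξ p.1) p.2)
      (μ.prod (volume.restrict (Ioc A B))) :=
  (hξ.comp_fst _).indicator₀ <| nullMeasurableSet_lt (f := Prod.snd) (g := fun p => φ p.1)
    measurable_snd.aemeasurable hφ.aemeasurable.comp_fst

lemma setIntegral_lt_eq_integral_indicator (hφ : AEStronglyMeasurable φ μ) (t : ℝ) :
    ∫ x in {x | t < φ x}, ξ x ∂μ = ∫ x, (Iio (φ x)).indicator (fun _ => ξ x) t ∂μ :=
  (integral_indicator₀ (nullMeasurableSet_lt aemeasurable_const hφ.aemeasurable)).symm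

lemma intervalIntegrable_setIntegral_lt [SFinite μ] (hξ : Integrable ξ μ)
    (hφ : AEStronglyMeasurable φ μ) (hAB : A ≤ B) :
    IntervalIntegrable (fun t => ∫ x in {x | t < φ x}, ξ x ∂μ) volume A B := by
  rw [intervalIntegrable_iff_integrableOn_Ioc_of_le hAB]
  simp_rw [setIntegral_lt_eq_integral_indicator hφ]
  exact (integrable_indicator_lt_prod hξ hφ).integral_prod_right

theorem integral_mul_eq_add_intervalIntegral [SFinite μ] (hξ : Integrable ξ μ)
    (hφ : AEStronglyMeasurable φ μ) (hAB : A ≤ B) (hA : ∀ x, A ≤ φ x) (hB : ∀ x, φ x ≤ B) :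
    ∫ x, ξ x * φ x ∂μ = A * ∫ x, ξ x ∂μ + ∫ t in A..B, ∫ x in {x | t < φ x}, ξ x ∂μ := by
  have slice (x : α) :
      ξ x * φ x = ξ x * A + ∫ t in Ioc A B, (Iio (φ x)).indicator (fun _ => ξ x) t := by
    rw [integral_Ioc_eq_integral_Ioo, setIntegral_indicator measurableSet_Iio, Ioo_inter_Iio,
      min_eq_right (hB x), setIntegral_const, Real.volume_real_Ioo_of_le (hA x), smul_eq_mul]
    ring
  have hF := integrable_indicator_lt_prod (A := A) (B := B) hξ hφ
  simp_rw [slice, intervalIntegral.integral_of_le hAB, setIntegral_lt_eq_integral_indicator hφ]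
  rw [integral_add (hξ.mul_const A) hF.integral_prod_left, integral_mul_const, mul_comm,
    integral_integral_swap hF]

end LayerCake

/-- The point of `[0, 1]` where a function nondecreasing on `(0, 1)` first exceeds the level `t`. -/
def crossingPoint (φ : ℝ → ℝ) (t : ℝ) : ℝ := sInf (insert 1 {x | x ∈ Ioo 0 1 ∧ t < φ x})

section CrossingPoint

variable {φ : ℝ → ℝ} {t : ℝ}

lemma bddBelow_crossingPoint_set : BddBelow (insert 1 {x | x ∈ Ioo (0 : ℝ) 1 ∧ t < φ x}) :=
  ⟨0, by rintro x (rfl | ⟨hx, -⟩) <;> [exact zero_le_one; exact hx.1.le]⟩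

lemma crossingPoint_mem_Icc : crossingPoint φ t ∈ Icc 0 1 :=
  ⟨le_csInf (insert_nonempty _ _) fun x hx => by
      rcases hx with rfl | ⟨hx, -⟩ <;> [exact zero_le_one; exact hx.1.le],
    csInf_le bddBelow_crossingPoint_set (mem_insert _ _)⟩

lemma crossingPoint_le {v : ℝ} (hv : v ∈ Ioo 0 1) (htv : t < φ v) : crossingPoint φ t ≤ v :=
  csInf_le bddBelow_crossingPoint_set (mem_insert_of_mem _ ⟨hv, htv⟩)

lemma le_crossingPoint (hφ : MonotoneOn φ (Ioo 0 1)) {u : ℝ} (hu : u ∈ Ioo 0 1) (hut : φ u ≤ t) :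
    u ≤ crossingPoint φ t := by
  refine le_csInf (insert_nonempty _ _) ?_
  rintro y (rfl | ⟨hy, hty⟩)
  · exact hu.2.le
  · by_contra! hyu
    exact (hty.trans_le (hφ hy hu hyu.le)).not_ge hut

lemma Ioo_crossingPoint_subset (hφ : MonotoneOn φ (Ioo 0 1)) :
    Ioo (crossingPoint φ t) 1 ⊆ Ioo 0 1 ∩ {x | t < φ x} := by
  intro x hx
  obtain ⟨y, rfl | ⟨hy, hty⟩, hyx⟩ := exists_lt_of_csInf_lt (insert_nonempty _ _) hx.1
  · exact absurd hx.2 hyx.not_gt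
  · have hx01 : x ∈ Ioo (0 : ℝ) 1 := ⟨hy.1.trans hyx, hx.2⟩
    exact ⟨hx01, hty.trans_le (hφ hy hx01 hyx.le)⟩

lemma upperLevelSet_ae_eq_Ioo (hφ : MonotoneOn φ (Ioo 0 1)) :
    (Ioo 0 1 ∩ {x | t < φ x} : Set ℝ) =ᵐ[volume] Ioo (crossingPoint φ t) 1 := by
  refine EventuallyLE.antisymm ?_ (Ioo_crossingPoint_subset hφ).eventuallyLE
  refine EventuallyLE.trans (LE.le.eventuallyLE ?_) Ioo_ae_eq_Icc.symm.le
  rintro x ⟨hx, htx⟩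
  exact ⟨csInf_le bddBelow_crossingPoint_set (mem_insert_of_mem _ ⟨hx, htx⟩), hx.2.le⟩

lemma crossingPoint_notMem_of_eqOn (hφ : MonotoneOn φ (Ioo 0 1)) {a b c : ℝ}
    (hab : Ioo a b ⊆ Ioo 0 1) (hc : EqOn φ (fun _ => c) (Ioo a b)) :
    crossingPoint φ t ∉ Ioo a b := by
  set s := crossingPoint φ t
  rintro ⟨has, hsb⟩
  rcases lt_or_ge t c with htc | hct
  · have hx : (a + s) / 2 ∈ Ioo a b := ⟨by linarith, by linarith⟩
    have := crossingPoint_le (hab hx) (htc.trans_eq (hc hx).symm)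
    linarith
  · have hx : (s + b) / 2 ∈ Ioo a b := ⟨by linarith, by linarith⟩
    have := le_crossingPoint hφ (hab hx) ((hc hx).trans_le hct)
    linarith

end CrossingPoint

section Primitive

variable {ξ : ℝ → ℝ}

lemma intervalIntegrable_of_integrableOn_Ioo (hξ : IntegrableOn ξ (Ioo 0 1)) {a b : ℝ}
    (ha : a ∈ Icc (0 : ℝ) 1) (hb : b ∈ Icc (0 : ℝ) 1) : IntervalIntegrable ξ volume a b :=
  ((intervalIntegrable_iff_integrableOn_Ioo_of_le zero_le_one).2 hξ).mono_set <|
    uIcc_subset_uIcc (by rwa [uIcc_of_le zero_le_one]) (by rwa [uIcc_of_le zero_le_one])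

lemma integral_Ioo_eq_primitive_sub (hξ : IntegrableOn ξ (Ioo 0 1)) {a b : ℝ} (ha : 0 ≤ a)
    (hab : a ≤ b) (hb : b ≤ 1) :
    ∫ x in Ioo a b, ξ x = (∫ s in (0 : ℝ)..b, ξ s) - ∫ s in (0 : ℝ)..a, ξ s := by
  rw [intervalIntegral.integral_interval_sub_left
      (intervalIntegrable_of_integrableOn_Ioo hξ ⟨le_rfl, zero_le_one⟩ ⟨ha.trans hab, hb⟩)
      (intervalIntegrable_of_integrableOn_Ioo hξ ⟨le_rfl, zero_le_one⟩ ⟨ha, hab.trans hb⟩),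
    intervalIntegral.integral_of_le hab, integral_Ioc_eq_integral_Ioo]

lemma continuousOn_primitive_Icc (hξ : IntegrableOn ξ (Ioo 0 1)) :
    ContinuousOn (fun w => ∫ s in (0 : ℝ)..w, ξ s) (Icc 0 1) := by
  simpa [uIcc_of_le zero_le_one] using intervalIntegral.continuousOn_primitive_interval'
    (intervalIntegrable_of_integrableOn_Ioo hξ (a := 0) (b := 1) ⟨le_rfl, zero_le_one⟩
      ⟨zero_le_one, le_rfl⟩) left_mem_uIcc

end Primitive

section Truncation

lemma max_min_sub_max_min_le {A B y y' : ℝ} (h : y ≤ y') :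
    max A (min B y') - max A (min B y) ≤ y' - y := by
  simp only [max_def, min_def]
  split_ifs <;> linarith

lemma abs_max_min_le_abs {A B : ℝ} (hA : A ≤ 0) (hB : 0 ≤ B) (y : ℝ) :
    |max A (min B y)| ≤ |y| := by
  simp only [max_def, min_def]
  split_ifs <;> simp only [abs_le] <;> constructor <;> linarith [le_abs_self y, neg_abs_le y]

lemma abs_max_min_le_add (A B y : ℝ) : |max A (min B y)| ≤ |A| + |B| := by
  simp only [max_def, min_def]
  split_ifs <;> simp only [abs_le] <;> constructor <;>
    linarith [le_abs_self A, neg_abs_le A, le_abs_self B, neg_abs_le B]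

variable {α : Type*} [MeasurableSpace α] {μ : Measure α}

lemma aestronglyMeasurable_max_min {g : α → ℝ} (hg : AEStronglyMeasurable g μ) (A B : ℝ) :
    AEStronglyMeasurable (fun x => max A (min B (g x))) μ :=
  (continuous_const.max (continuous_const.min continuous_id)).comp_aestronglyMeasurable hg

lemma memLp_max_min [IsFiniteMeasure μ] {g : α → ℝ} (hg : AEStronglyMeasurable g μ)
    (A B : ℝ) {p : ENNReal} : MemLp (fun x => max A (min B (g x))) p μ :=
  .of_bound (aestronglyMeasurable_max_min hg A B) (|A| + |B|)
    (ae_of_all _ fun x => abs_max_min_le_add A B (g x))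

lemma tendsto_integral_mul_max_min {ξ φ : α → ℝ} (hξφ : Integrable (fun x => ξ x * φ x) μ)
    (hξ : AEStronglyMeasurable ξ μ) (hφ : AEStronglyMeasurable φ μ) :
    Tendsto (fun n : ℕ => ∫ x, ξ x * max (-(n : ℝ)) (min (n : ℝ) (φ x)) ∂μ) atTop
      (𝓝 (∫ x, ξ x * φ x ∂μ)) := by
  refine tendsto_integral_of_dominated_convergence (fun x => ‖ξ x * φ x‖) (fun n => ?_) hξφ.norm
    (fun n => ae_of_all _ fun x => ?_) (ae_of_all _ fun x => ?_)
  · exact hξ.mul (aestronglyMeasurable_max_min hφ _ _)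
  · simp only [norm_mul, Real.norm_eq_abs]
    exact mul_le_mul_of_nonneg_left (abs_max_min_le_abs (by simp) (by simp) _) (abs_nonneg _)
  · refine tendsto_atTop_of_eventually_const (i₀ := ⌈|φ x|⌉₊) fun n hn => ?_
    have hφn : |φ x| ≤ n := (Nat.le_ceil _).trans (by exact_mod_cast hn)
    rw [min_eq_right ((le_abs_self _).trans hφn),
      max_eq_right (neg_le.1 ((neg_le_abs _).trans hφn))]

end Truncation

section IntegrationByParts

variable {ξ φ : ℝ → ℝ}

lemma setIntegral_upperLevelSet (hξ : IntegrableOn ξ (Ioo 0 1)) (hφ : MonotoneOn φ (Ioo 0 1))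
    (t : ℝ) :
    ∫ x in {x | t < φ x}, ξ x ∂volume.restrict (Ioo 0 1) =
      (∫ s in (0 : ℝ)..1, ξ s) - ∫ s in (0 : ℝ)..crossingPoint φ t, ξ s := by
  obtain ⟨h0, h1⟩ := crossingPoint_mem_Icc (φ := φ) (t := t)
  rw [Measure.restrict_restrict' measurableSet_Ioo, inter_comm,
    setIntegral_congr_set (upperLevelSet_ae_eq_Ioo hφ),
    integral_Ioo_eq_primitive_sub hξ h0 h1 le_rfl]

lemma intervalIntegrable_primitive_crossingPoint (hξ : IntegrableOn ξ (Ioo 0 1))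
    (hφ : MonotoneOn φ (Ioo 0 1)) (hφm : AEStronglyMeasurable φ (volume.restrict (Ioo 0 1)))
    {A B : ℝ} (hAB : A ≤ B) :
    IntervalIntegrable (fun t => ∫ s in (0 : ℝ)..crossingPoint φ t, ξ s) volume A B := by
  have := (intervalIntegrable_const (c := ∫ s in (0 : ℝ)..1, ξ s)).sub
    (intervalIntegrable_setIntegral_lt hξ hφm hAB)
  simpa only [setIntegral_upperLevelSet hξ hφ, sub_sub_cancel] using this

theorem integral_mul_eq_sub_integral_primitive_crossingPoint (hξ : IntegrableOn ξ (Ioo 0 1))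
    (hφ : MonotoneOn φ (Ioo 0 1)) (hφm : AEStronglyMeasurable φ (volume.restrict (Ioo 0 1)))
    {A B : ℝ} (hAB : A ≤ B) (hA : ∀ x, A ≤ φ x) (hB : ∀ x, φ x ≤ B) :
    ∫ x in Ioo 0 1, ξ x * φ x =
      B * (∫ s in (0 : ℝ)..1, ξ s) - ∫ t in A..B, ∫ s in (0 : ℝ)..crossingPoint φ t, ξ s := by
  rw [integral_mul_eq_add_intervalIntegral hξ hφm hAB hA hB]
  simp_rw [setIntegral_upperLevelSet hξ hφ]
  rw [intervalIntegral.integral_sub intervalIntegrable_const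
      (intervalIntegrable_primitive_crossingPoint hξ hφ hφm hAB),
    intervalIntegral.integral_const, smul_eq_mul,
    integral_Ioo_eq_primitive_sub hξ le_rfl zero_le_one le_rfl, intervalIntegral.integral_same]
  ring

lemma integral_mul_max_min_eq_neg (hξ : IntegrableOn ξ (Ioo 0 1))
    (hξ1 : ∫ s in (0 : ℝ)..1, ξ s = 0) (hφ : MonotoneOn φ (Ioo 0 1))
    (hφm : AEStronglyMeasurable φ (volume.restrict (Ioo 0 1))) {A B : ℝ} (hAB : A ≤ B) :
    ∫ x in Ioo 0 1, ξ x * max A (min B (φ x)) =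
      -∫ t in A..B, ∫ s in (0 : ℝ)..crossingPoint (fun x => max A (min B (φ x))) t, ξ s := by
  rw [integral_mul_eq_sub_integral_primitive_crossingPoint hξ
    (monotoneOn_const.max (monotoneOn_const.min hφ)) (aestronglyMeasurable_max_min hφm A B) hAB
    (fun _ => le_max_left _ _) (fun _ => max_le hAB (min_le_left _ _)), hξ1, mul_zero, zero_sub]

end IntegrationByParts

section Cone

lemma add_mem_coneK {f g : ℝ → ℝ} (hf : f ∈ coneK) (hg : g ∈ coneK) :
    (fun x => f x + g x) ∈ coneK :=
  ⟨hf.1.add hg.1, hf.2.add hg.2⟩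

lemma const_mem_coneK (c : ℝ) : (fun _ => c) ∈ coneK := ⟨monotoneOn_const, memLp_const c⟩

variable {g : ℝ → ℝ}

lemma max_min_mem_coneK (hg : g ∈ coneK) (A B : ℝ) : (fun x => max A (min B (g x))) ∈ coneK :=
  ⟨monotoneOn_const.max (monotoneOn_const.min hg.1), memLp_max_min hg.2.1 A B⟩

lemma two_mul_sub_max_min_mem_coneK (hg : g ∈ coneK) (A B : ℝ) :
    (fun x => 2 * g x - max A (min B (g x))) ∈ coneK := by
  refine ⟨fun x hx y hy hxy => ?_, (hg.2.const_mul 2).sub (memLp_max_min hg.2.1 A B)⟩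
  have hgxy := hg.1 hx hy hxy
  linarith [max_min_sub_max_min_le (A := A) (B := B) hgxy]

end Cone

section LocConstSet

variable {g : ℝ → ℝ}

lemma exists_mem_Ioo_of_ae_μ01 {P : ℝ → Prop} (h : ∀ᵐ x ∂μ01, P x) {u v : ℝ} (hu : 0 ≤ u)
    (huv : u < v) (hv : v ≤ 1) : ∃ y ∈ Ioo u v, P y := by
  have : (ae (volume.restrict (Ioo u v))).NeBot := ae_restrict_neBot.2 (by simp [huv])
  exact ((ae_restrict_mem measurableSet_Ioo).and
    (ae_restrict_of_ae_restrict_of_subset (Ioo_subset_Ioo hu hv) h)).exists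

lemma MonotoneOn.eqOn_of_ae_eq (hg : MonotoneOn g (Ioo 0 1)) {a b c : ℝ}
    (hae : ∀ᵐ x ∂μ01, x ∈ Ioo a b → g x = c) : EqOn g (fun _ => c) (Ioo (max a 0) (min b 1)) := by
  intro x hx
  have hx01 : x ∈ Ioo (0 : ℝ) 1 :=
    ⟨(le_max_right a 0).trans_lt hx.1, hx.2.trans_le (min_le_right b 1)⟩
  have hI : Ioo (max a 0) (min b 1) ⊆ Ioo a b ∩ Ioo 0 1 :=
    subset_inter (Ioo_subset_Ioo (le_max_left a 0) (min_le_left b 1))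
      (Ioo_subset_Ioo (le_max_right a 0) (min_le_right b 1))
  obtain ⟨y, hy, hgy⟩ := exists_mem_Ioo_of_ae_μ01 hae (le_max_right a 0) hx.1 hx01.2.le
  obtain ⟨z, hz, hgz⟩ := exists_mem_Ioo_of_ae_μ01 hae hx01.1.le hx.2 (min_le_right b 1)
  have hyI := hI ⟨hy.1, hy.2.trans hx.2⟩
  have hzI := hI ⟨hx.1.trans hz.1, hz.2⟩
  have h1 := hg hyI.2 hx01 hy.2.le
  have h2 := hg hx01 hzI.2 hz.1.le
  rw [hgy hyI.1] at h1
  rw [hgz hzI.1] at h2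
  exact le_antisymm h2 h1

lemma crossingPoint_max_min_notMem_locConstSet (hg : MonotoneOn g (Ioo 0 1)) (A B t : ℝ) :
    crossingPoint (fun x => max A (min B (g x))) t ∉ locConstSet g := by
  rintro ⟨hs, a, b, c, has, hsb, hae⟩
  refine crossingPoint_notMem_of_eqOn (monotoneOn_const.max (monotoneOn_const.min hg))
    (Ioo_subset_Ioo (le_max_right a 0) (min_le_right b 1)) (c := max A (min B c))
    (fun x hx => by simp only [hg.eqOn_of_ae_eq hae hx]) ⟨max_lt has hs.1, lt_min hsb hs.2⟩

lemma exists_lt_of_notMem_locConstSet {w a b : ℝ}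
    (hw : w ∉ locConstSet g) (haw : a < w) (hwb : w < b) (hab : Ioo a b ⊆ Ioo 0 1) :
    ∃ u ∈ Ioo a b, ∃ v ∈ Ioo a b, g u < g v := by
  by_contra! hconst
  refine hw ⟨hab ⟨haw, hwb⟩, a, b, g w, haw, hwb, ae_of_all _ fun x hx => ?_⟩
  exact le_antisymm (hconst w ⟨haw, hwb⟩ x hx) (hconst x hx w ⟨haw, hwb⟩)

end LocConstSet

namespace subdiffIK

variable {g ξ : ℝ → ℝ}

lemma integral_mul_eq_zero_of_add_mem_of_sub_mem (h : subdiffIK g ξ) {d : ℝ → ℝ}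
    (hadd : (fun x => g x + d x) ∈ coneK) (hsub : (fun x => g x - d x) ∈ coneK) :
    ∫ x in Ioo 0 1, ξ x * d x = 0 := by
  have h₁ := h.2 _ hadd
  have h₂ := h.2 _ hsub
  simp only [add_sub_cancel_left, sub_sub_cancel_left, mul_neg, integral_neg, neg_nonpos] at h₁ h₂
  exact le_antisymm h₁ h₂

lemma primitive_one_eq_zero (h : subdiffIK g ξ) : ∫ s in (0 : ℝ)..1, ξ s = 0 := by
  have := h.integral_mul_eq_zero_of_add_mem_of_sub_mem (add_mem_coneK h.1 (const_mem_coneK 1))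
    (by simpa only [sub_eq_add_neg] using add_mem_coneK h.1 (const_mem_coneK (-1)))
  rwa [intervalIntegral.integral_of_le zero_le_one, integral_Ioc_eq_integral_Ioo,
    ← funext fun x => mul_one (ξ x)]

lemma integral_mul_eq_zero (h : subdiffIK g ξ) : ∫ x in Ioo 0 1, ξ x * g x = 0 :=
  h.integral_mul_eq_zero_of_add_mem_of_sub_mem (add_mem_coneK h.1 h.1)
    (by simpa only [sub_self] using const_mem_coneK 0)

lemma primitive_nonneg (h : subdiffIK g ξ) (hξ : IntegrableOn ξ (Ioo 0 1)) {w : ℝ}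
    (hw : w ∈ Icc (0 : ℝ) 1) : 0 ≤ ∫ s in (0 : ℝ)..w, ξ s := by
  have hstep : (Ioi w).indicator (fun _ => (1 : ℝ)) ∈ coneK := by
    refine ⟨fun x _ y _ hxy => ?_,
      memLp_indicator_const 2 measurableSet_Ioi 1 (Or.inr (measure_ne_top _ _))⟩
    simp only [indicator_apply, mem_Ioi]
    split_ifs with hx hy <;> first | exact absurd (hx.trans_le hxy) hy | norm_num
  have := h.2 _ (add_mem_coneK h.1 hstep)
  simp only [add_sub_cancel_left, ← indicator_mul_right, mul_one] at this
  rw [setIntegral_indicator measurableSet_Ioi, Ioo_inter_Ioi, max_eq_right hw.1,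
    integral_Ioo_eq_primitive_sub hξ hw.1 hw.2 le_rfl, h.primitive_one_eq_zero] at this
  linarith

lemma integral_mul_max_min_eq_zero (h : subdiffIK g ξ) (hξ : MemLp ξ 2 μ01) (A B : ℝ) :
    ∫ x in Ioo 0 1, ξ x * max A (min B (g x)) = 0 := by
  have hd := h.integral_mul_eq_zero_of_add_mem_of_sub_mem (d := fun x => max A (min B (g x)) - g x)
    (by simpa only [add_sub_cancel] using max_min_mem_coneK h.1 A B)
    (by convert two_mul_sub_max_min_mem_coneK h.1 A B using 2; ring)
  have hg : Integrable (fun x => ξ x * g x) (volume.restrict (Ioo 0 1)) := hξ.integrable_mul h.1.2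
  have hc : Integrable (fun x => ξ x * max A (min B (g x))) (volume.restrict (Ioo 0 1)) :=
    hξ.integrable_mul (memLp_max_min (p := 2) h.1.2.1 A B)
  simp only [mul_sub] at hd
  rw [integral_sub hc hg, h.integral_mul_eq_zero, sub_zero] at hd
  exact hd

lemma primitive_eq_zero_of_notMem_locConstSet (h : subdiffIK g ξ)
    (hξ : MemLp ξ 2 μ01) {w : ℝ} (hw : w ∈ Icc (0 : ℝ) 1) (hwg : w ∉ locConstSet g) :
    ∫ s in (0 : ℝ)..w, ξ s = 0 := by
  have hξ' : IntegrableOn ξ (Ioo 0 1) := hξ.integrable one_le_two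
  rcases hw.1.eq_or_lt with rfl | hw0
  · exact intervalIntegral.integral_same
  rcases hw.2.eq_or_lt with rfl | hw1
  · exact h.primitive_one_eq_zero
  refine (h.primitive_nonneg hξ' hw).antisymm' (not_lt.1 fun hpos => ?_)
  have hnhds : {y | y ∈ Ioo (0 : ℝ) 1 ∧ 0 < ∫ s in (0 : ℝ)..y, ξ s} ∈ 𝓝 w :=
    inter_mem (Ioo_mem_nhds hw0 hw1) <| ((continuousOn_primitive_Icc hξ').continuousAt
      (Icc_mem_nhds hw0 hw1)).preimage_mem_nhds (Ioi_mem_nhds hpos)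
  obtain ⟨a, b, ⟨haw, hwb⟩, hab⟩ := mem_nhds_iff_exists_Ioo_subset.1 hnhds
  obtain ⟨u, hu, v, hv, hguv⟩ :=
    exists_lt_of_notMem_locConstSet hwg haw hwb fun y hy => (hab hy).1
  set φ := fun x => max (g u) (min (g v) (g x))
  have hcross (t : ℝ) (ht : t ∈ Ioo (g u) (g v)) : 0 < ∫ s in (0 : ℝ)..crossingPoint φ t, ξ s := by
    have hut : u ≤ crossingPoint φ t :=
      le_crossingPoint (monotoneOn_const.max (monotoneOn_const.min h.1.1)) (hab hu).1
        (show max (g u) (min (g v) (g u)) ≤ t by rw [min_eq_right hguv.le, max_self]; exact ht.1.le)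
    have htv : crossingPoint φ t ≤ v :=
      crossingPoint_le (hab hv).1 <|
        show t < max (g u) (min (g v) (g v)) by rw [min_self, max_eq_right hguv.le]; exact ht.2
    exact (hab ⟨hu.1.trans_le hut, htv.trans_lt hv.2⟩).2
  have hint := integral_mul_max_min_eq_neg hξ' h.primitive_one_eq_zero h.1.1 h.1.2.1 hguv.le
  rw [h.integral_mul_max_min_eq_zero hξ] at hint
  have := intervalIntegral.intervalIntegral_pos_of_pos_on
    (intervalIntegrable_primitive_crossingPoint hξ'
      (monotoneOn_const.max (monotoneOn_const.min h.1.1))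
      (aestronglyMeasurable_max_min h.1.2.1 _ _) hguv.le) hcross hguv
  linarith

end subdiffIK

section Sufficiency

variable {ξ : ℝ → ℝ}

lemma integral_mul_nonpos_of_primitive_nonneg (hξ : MemLp ξ 2 μ01)
    (hpos : ∀ w ∈ Icc (0 : ℝ) 1, 0 ≤ ∫ s in (0 : ℝ)..w, ξ s) (hξ1 : ∫ s in (0 : ℝ)..1, ξ s = 0)
    {z : ℝ → ℝ} (hz : z ∈ coneK) : ∫ x in Ioo 0 1, ξ x * z x ≤ 0 := by
  refine le_of_tendsto' (tendsto_integral_mul_max_min (μ := volume.restrict (Ioo 0 1))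
    (by exact hξ.integrable_mul hz.2) hξ.1 hz.2.1) fun n => ?_
  rw [integral_mul_max_min_eq_neg (hξ.integrable one_le_two) hξ1 hz.1 hz.2.1
    (neg_le_self n.cast_nonneg), neg_nonpos]
  exact intervalIntegral.integral_nonneg (neg_le_self n.cast_nonneg)
    fun t _ => hpos _ crossingPoint_mem_Icc

lemma integral_mul_eq_zero_of_primitive_eq_zero (hξ : MemLp ξ 2 μ01)
    (hξ1 : ∫ s in (0 : ℝ)..1, ξ s = 0) {g : ℝ → ℝ} (hg : g ∈ coneK)
    (hvan : ∀ w ∈ Icc (0 : ℝ) 1, w ∉ locConstSet g → ∫ s in (0 : ℝ)..w, ξ s = 0) :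
    ∫ x in Ioo 0 1, ξ x * g x = 0 := by
  refine tendsto_nhds_unique (tendsto_integral_mul_max_min (μ := volume.restrict (Ioo 0 1))
    (by exact hξ.integrable_mul hg.2) hξ.1 hg.2.1) ?_
  refine tendsto_const_nhds.congr fun n => ?_
  have hzero (t : ℝ) :
      ∫ s in (0 : ℝ)..crossingPoint (fun x => max (-(n : ℝ)) (min (n : ℝ) (g x))) t, ξ s = 0 :=
    hvan _ crossingPoint_mem_Icc (crossingPoint_max_min_notMem_locConstSet hg.1 _ _ t)
  rw [integral_mul_max_min_eq_neg (hξ.integrable one_le_two) hξ1 hg.1 hg.2.1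
    (neg_le_self n.cast_nonneg)]
  simp only [hzero, intervalIntegral.integral_zero, neg_zero]

end Sufficiency

theorem stmt9 (g ξ Ξ : ℝ → ℝ) (hg : g ∈ coneK) (hξ : MeasureTheory.MemLp ξ 2 μ01)
    (hΞ : ∀ w, Ξ w = ∫ s in (0:ℝ)..w, ξ s) :
    subdiffIK g ξ ↔
      ((∀ w ∈ Set.Icc (0:ℝ) 1, 0 ≤ Ξ w) ∧ Ξ 0 = 0 ∧ Ξ 1 = 0 ∧
        ∀ w ∈ Set.Icc (0:ℝ) 1, w ∉ locConstSet g → Ξ w = 0) := by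
  obtain rfl : Ξ = fun w => ∫ s in (0 : ℝ)..w, ξ s := funext hΞ
  refine ⟨fun h => ⟨fun w => h.primitive_nonneg (hξ.integrable one_le_two),
    intervalIntegral.integral_same, h.primitive_one_eq_zero,
    fun w => h.primitive_eq_zero_of_notMem_locConstSet hξ⟩, ?_⟩
  rintro ⟨hpos, -, hξ1, hvan⟩
  refine ⟨hg, fun z hz => ?_⟩
  have hint {f : ℝ → ℝ} (hf : f ∈ coneK) :
      Integrable (fun x => ξ x * f x) (volume.restrict (Ioo 0 1)) :=
    hξ.integrable_mul hf.2
  simp only [mul_sub]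
  rw [integral_sub (hint hz) (hint hg),
    integral_mul_eq_zero_of_primitive_eq_zero hξ hξ1 hg hvan, sub_zero]
  exact integral_mul_nonpos_of_primitive_nonneg hξ hpos hξ1 hz
end
end
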